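/- Let L ∈ 𝐋 and V ∈ 𝐕(L). Then for every M ∈ 𝐋 and every u ∈ [0,1], the semi-concavity inequality d_ABW(L+uV, M)² ≥ (1−u)·d_ABW(L,M)² + u·d_ABW(L+V, M)² − u(1−u)·‖V‖_F² holds. (This is the non-negative-curvature comparison inequality showing that the adapted Bures–Wasserstein space is an Alexandrov space with non-negative curvature.) -/

import Mathlib

open Matrix Filter Topology

/-- Square matrices of size `dT × dT`, indexed by blocks: index `(t, i)` is
row/column `i` within block `t`. -/
abbrev Mat (d T : ℕ) := Matrix (Fin T × Fin d) (Fin T × Fin d) ℝ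

/-- The `t`-th diagonal `d × d` block of a `dT × dT` matrix. -/
def blk {d T : ℕ} (A : Mat d T) (t : Fin T) : Matrix (Fin d) (Fin d) ℝ :=
  fun i j => A (t, i) (t, j)

/-- The `t`-th block column of a `dT × dT` matrix, a `dT × d` matrix. -/
def colBlk {d T : ℕ} (A : Mat d T) (t : Fin T) : Matrix (Fin T × Fin d) (Fin d) ℝ :=
  fun p j => A p (t, j)

/-- Membership in `𝐋`: block lower triangular matrices. -/
def memL {d T : ℕ} (A : Mat d T) : Prop :=
  ∀ (t s : Fin T) (i j : Fin d), t < s → A (t, i) (s, j) = 0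

/-- Membership in `𝐎`: block diagonal matrices with orthogonal `d × d` diagonal blocks
(equivalently: block diagonal and orthogonal). -/
def memO {d T : ℕ} (O : Mat d T) : Prop :=
  (∀ (t s : Fin T) (i j : Fin d), t ≠ s → O (t, i) (s, j) = 0) ∧ Oᵀ * O = 1

/-- The Frobenius norm of a real matrix. -/
noncomputable def frobNorm {m n : Type*} [Fintype m] [Fintype n] (A : Matrix m n ℝ) : ℝ :=
  Real.sqrt (∑ i, ∑ j, (A i j) ^ 2)

/-- The Frobenius inner product of two real matrices. -/
noncomputable def frobInner {m n : Type*} [Fintype m] [Fintype n] (A B : Matrix m n ℝ) : ℝ :=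
  ∑ i, ∑ j, A i j * B i j

/-- The adapted Bures–Wasserstein distance `d_ABW(L, M) = inf_{O ∈ 𝐎} ‖L - M O‖_F`. -/
noncomputable def dABW {d T : ℕ} (L M : Mat d T) : ℝ :=
  sInf {r : ℝ | ∃ O : Mat d T, memO O ∧ r = frobNorm (L - M * O)}

/-- The set `𝐎*(L, M)` of optimizers of `inf_{O ∈ 𝐎} ‖L - M O‖_F`. -/
noncomputable def OStar {d T : ℕ} (L M : Mat d T) : Set (Mat d T) :=
  {O | memO O ∧ frobNorm (L - M * O) = dABW L M}

/-- The set `𝐕(L) = {M P - L : M ∈ 𝐋, P ∈ 𝐎*(L, M)}`. -/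
noncomputable def VSet {d T : ℕ} (L : Mat d T) : Set (Mat d T) :=
  {V | ∃ M P : Mat d T, memL M ∧ P ∈ OStar L M ∧ V = M * P - L}

/-- The set `𝒱(L) = {V ∈ 𝐋 : (Vᵀ L)_{t,t} is symmetric for all t}`. -/
def calV {d T : ℕ} (L : Mat d T) : Set (Mat d T) :=
  {V | memL V ∧ ∀ t : Fin T, (blk (Vᵀ * L) t).IsSymm}

/-- The set `𝐋^reg = {L ∈ 𝐋 : (Lᵀ L)_{t,t} is positive definite for all t}`. -/
def LReg {d T : ℕ} : Set (Mat d T) :=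
  {L | memL L ∧ ∀ t : Fin T, (blk (Lᵀ * L) t).PosDef}

/-- The sum of the singular values of a real square matrix `A`,
i.e. the trace of the positive semidefinite square root of `Aᵀ A`. -/
noncomputable def svSum {n : ℕ} (A : Matrix (Fin n) (Fin n) ℝ) : ℝ :=
  ((Matrix.posSemidef_conjTranspose_mul_self A).1.eigenvectorUnitary.1 *
    diagonal ((√·) ∘ (Matrix.posSemidef_conjTranspose_mul_self A).1.eigenvalues) *
    (star (Matrix.posSemidef_conjTranspose_mul_self A).1.eigenvectorUnitary).1).trace

/-- The operator norm of a real matrix: the supremum of the euclidean norm `‖A x‖₂`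
over the euclidean unit ball. -/
noncomputable def opNorm {m n : Type*} [Fintype m] [Fintype n] (A : Matrix m n ℝ) : ℝ :=
  sSup {r : ℝ | ∃ x : n → ℝ, (∑ j, (x j) ^ 2) ≤ 1 ∧ r = Real.sqrt (∑ i, (A.mulVec x i) ^ 2)}

/-! The squared distance `d_ABW(·, M)²` is an infimum, over the orbit `{M O : O ∈ 𝐎}`, of
squared Frobenius distances. Each of these is a quadratic function along the segment
`u ↦ L + u V` with leading coefficient `‖V‖_F²`, i.e. it satisfies the semi-concavity
inequality with equality; an infimum of such functions still satisfies the inequality. -/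

section Frobenius

variable {m n : Type*} [Fintype m] [Fintype n]

lemma frobNorm_nonneg (A : Matrix m n ℝ) : 0 ≤ frobNorm A :=
  Real.sqrt_nonneg _

lemma frobNorm_sq (A : Matrix m n ℝ) : frobNorm A ^ 2 = ∑ i, ∑ j, (A i j) ^ 2 :=
  Real.sq_sqrt (by positivity)

lemma frobNorm_add_smul_sq (A B : Matrix m n ℝ) (u : ℝ) :
    frobNorm (A + u • B) ^ 2 =
      (1 - u) * frobNorm A ^ 2 + u * frobNorm (A + B) ^ 2 - u * (1 - u) * frobNorm B ^ 2 := by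
  simp only [frobNorm_sq, Finset.mul_sum, ← Finset.sum_add_distrib, ← Finset.sum_sub_distrib]
  refine Finset.sum_congr rfl fun i _ => Finset.sum_congr rfl fun j _ => ?_
  simp only [Matrix.add_apply, Matrix.smul_apply, smul_eq_mul]
  ring

end Frobenius

section ABW

variable {d T : ℕ}

lemma memO_one : memO (1 : Mat d T) :=
  ⟨fun _ _ _ _ h => one_apply_ne fun hc => h (congrArg Prod.fst hc), by simp⟩

lemma dABW_nonneg (L M : Mat d T) : 0 ≤ dABW L M :=
  le_csInf ⟨_, 1, memO_one, rfl⟩ (by rintro r ⟨O, -, rfl⟩; exact frobNorm_nonneg _)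

lemma dABW_le_frobNorm (L M : Mat d T) {O : Mat d T} (hO : memO O) :
    dABW L M ≤ frobNorm (L - M * O) :=
  csInf_le ⟨0, by rintro r ⟨O', -, rfl⟩; exact frobNorm_nonneg _⟩ ⟨O, hO, rfl⟩

lemma dABW_sq_le_frobNorm_sq (L M : Mat d T) {O : Mat d T} (hO : memO O) :
    dABW L M ^ 2 ≤ frobNorm (L - M * O) ^ 2 :=
  pow_le_pow_left₀ (dABW_nonneg L M) (dABW_le_frobNorm L M hO) 2

lemma le_dABW_sq {L M : Mat d T} {c : ℝ}
    (h : ∀ O, memO O → c ≤ frobNorm (L - M * O) ^ 2) : c ≤ dABW L M ^ 2 := by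
  by_contra! hlt
  have hlt' : dABW L M < √c := (Real.lt_sqrt (dABW_nonneg L M)).2 hlt
  obtain ⟨_, ⟨O, hO, rfl⟩, hOc⟩ :=
    exists_lt_of_csInf_lt (s := {r | ∃ O, memO O ∧ r = frobNorm (L - M * O)})
      ⟨_, 1, memO_one, rfl⟩ hlt'
  exact (h O hO).not_gt ((Real.lt_sqrt (frobNorm_nonneg _)).1 hOc)

end ABW

theorem stmt10_general (d T : ℕ) (L V : Mat d T) :
    ∀ M : Mat d T, memL M → ∀ u : ℝ, u ∈ Set.Icc (0 : ℝ) 1 →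
      dABW (L + u • V) M ^ 2 ≥
        (1 - u) * dABW L M ^ 2 + u * dABW (L + V) M ^ 2
          - u * (1 - u) * frobNorm V ^ 2 := by
  rintro M - u ⟨hu0, hu1⟩
  refine le_dABW_sq fun O hO => ?_
  have hsegment : L + u • V - M * O = (L - M * O) + u • V := by abel
  have hend : L - M * O + V = L + V - M * O := by abel
  rw [hsegment, frobNorm_add_smul_sq, hend]
  have h0 := mul_le_mul_of_nonneg_left (dABW_sq_le_frobNorm_sq L M hO) (sub_nonneg.2 hu1)
  have h1 := mul_le_mul_of_nonneg_left (dABW_sq_le_frobNorm_sq (L + V) M hO) hu0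
  linarith

/-- the semi-concavity (non-negative curvature) inequality along the geodesic
`u ↦ L + uV`. -/
theorem stmt10 (d T : ℕ) (hd : 0 < d) (hT : 0 < T) (L V : Mat d T)
    (hL : memL L) (hV : V ∈ VSet L) :
    ∀ M : Mat d T, memL M → ∀ u : ℝ, u ∈ Set.Icc (0 : ℝ) 1 →
      dABW (L + u • V) M ^ 2 ≥
        (1 - u) * dABW L M ^ 2 + u * dABW (L + V) M ^ 2
          - u * (1 - u) * frobNorm V ^ 2 :=
  stmt10_general d T L V
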